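/- arXiv:0905.0447 — 2 statements merged into one kernel-verified Lean document; each statement's English description precedes it below -/
import Mathlib

section
/- Suppose v : (0,ε) → ℝ satisfies the ODE t v'(t) - a v(t) = t c(t) v(t) near t = 0, where c is smooth on [0,ε) and a ∈ ℝ. Then for each N there exist coefficients v₀,...,v_N with v₀ arbitrary and v_l determined recursively by l·v_l = q_{l-1}(c, v₀,...,v_{l-1}), such that v(t) - t^a Σ_{l=0}^N v_l t^l = o(t^{a+N}) as t → 0. In particular t^{-a} v extends continuously to t = 0. -/
open Filter

open Set Nat

private lemma iDW_congr_set {f : ℝ → ℝ} {s t : Set ℝ} {x : ℝ} (h : s =ᶠ[nhds x] t) (n : ℕ) :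
    iteratedDerivWithin n f s x = iteratedDerivWithin n f t x := by
  simp only [iteratedDerivWithin]
  rw [iteratedFDerivWithin_congr_set h]

/-- On a right-neighborhood of 0 the sets `Icc 0 x` and `Ico 0 ε` agree near interior pts. -/
private lemma sets_eq_near {x ε y : ℝ} (hx : 0 < x) (hxε : x < ε) (hy : y ∈ Ioo 0 x) :
    Icc (0:ℝ) x =ᶠ[nhds y] Ico (0:ℝ) ε := by
  rw [Filter.eventuallyEq_set]
  filter_upwards [isOpen_Ioo.mem_nhds hy] with z hz
  simp only [mem_Icc, mem_Ico]
  constructor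
  · intro h; exact ⟨h.1, lt_of_le_of_lt h.2 hxε⟩
  · intro h; exact ⟨h.1, le_of_lt hz.2⟩

private lemma sets_eq_zero {x ε : ℝ} (hx : 0 < x) (hε : 0 < ε) :
    Icc (0:ℝ) x =ᶠ[nhds 0] Ico (0:ℝ) ε := by
  rw [Filter.eventuallyEq_set]
  filter_upwards [isOpen_Ioo.mem_nhds (show (0:ℝ) ∈ Ioo (-(min x ε)) (min x ε) by
    constructor <;> simp [hx, hε, lt_min hx hε])] with z hz
  simp only [mem_Icc, mem_Ico]
  constructor
  · intro h; exact ⟨h.1, lt_of_lt_of_le hz.2 (min_le_right _ _)⟩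
  · intro h; exact ⟨h.1, le_of_lt (lt_of_lt_of_le hz.2 (min_le_left _ _))⟩

/-- Peano-form Taylor expansion from the right for a function smooth on `[0,ε)`. -/
private lemma taylor_littleO {f : ℝ → ℝ} {ε : ℝ} (hε : 0 < ε)
    (hf : ContDiffOn ℝ (⊤ : ℕ∞) f (Ico 0 ε)) (N : ℕ) :
    (fun t : ℝ => f t - ∑ l ∈ Finset.range (N + 1),
        (iteratedDerivWithin l f (Ico 0 ε) 0 / l !) * t ^ l)
      =o[nhdsWithin 0 (Ioi 0)] fun t : ℝ => t ^ N := by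
  have husd : UniqueDiffOn ℝ (Ico (0:ℝ) ε) := uniqueDiffOn_Ico 0 ε
  -- bound for the (N+1)-st derivative on [0, ε/2]
  have hcont : ContinuousOn (iteratedDerivWithin (N + 1) f (Ico 0 ε)) (Ico 0 ε) :=
    hf.continuousOn_iteratedDerivWithin (by exact_mod_cast le_top) husd
  obtain ⟨M, hM⟩ := (isCompact_Icc (a := (0:ℝ)) (b := ε / 2)).exists_bound_of_continuousOn
    (hcont.mono (fun z hz => ⟨hz.1, lt_of_le_of_lt hz.2 (by linarith)⟩))
  -- pointwise Lagrange bound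
  have key : ∀ x ∈ Ioo (0:ℝ) (ε / 2),
      |f x - ∑ l ∈ Finset.range (N + 1),
        (iteratedDerivWithin l f (Ico 0 ε) 0 / l !) * x ^ l| ≤ (M / (N+1)!) * x ^ (N + 1) := by
    intro x hx
    have hxε : x < ε := lt_trans hx.2 (by linarith)
    have hIcc : Icc (0:ℝ) x ⊆ Ico 0 ε := fun z hz => ⟨hz.1, lt_of_le_of_lt hz.2 hxε⟩
    have hfx : ContDiffOn ℝ N f (Icc 0 x) := (hf.of_le (by exact_mod_cast le_top)).mono hIcc
    have hdiff : DifferentiableOn ℝ (iteratedDerivWithin N f (Icc 0 x)) (Ioo 0 x) := by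
      intro y hy
      have hnb : Ico (0:ℝ) ε ∈ nhds y :=
        mem_of_superset (isOpen_Ioo.mem_nhds hy) (fun z hz => hIcc ⟨le_of_lt hz.1, le_of_lt hz.2⟩)
      have hlt : (N : WithTop ℕ∞) < ((⊤ : ℕ∞) : WithTop ℕ∞) := by
        exact_mod_cast ENat.coe_lt_top N
      have hd : DifferentiableAt ℝ (iteratedDerivWithin N f (Ico 0 ε)) y := by
        have := (hf.differentiableOn_iteratedDerivWithin (m := N) hlt husd) y
          (hIcc ⟨le_of_lt hy.1, le_of_lt hy.2⟩)
        exact this.differentiableAt hnb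
      have heq : iteratedDerivWithin N f (Icc 0 x) =ᶠ[nhds y]
          iteratedDerivWithin N f (Ico 0 ε) := by
        filter_upwards [isOpen_Ioo.mem_nhds hy] with z hz
        exact iDW_congr_set (sets_eq_near hx.1 hxε hz) N
      exact ((hd.congr_of_eventuallyEq heq).differentiableWithinAt)
    obtain ⟨ξ, hξ, hR⟩ := taylor_mean_remainder_lagrange (ne_of_lt hx.1)
      (by rwa [uIcc_of_le hx.1.le]) (by rwa [uIcc_of_le hx.1.le, uIoo_of_le hx.1.le])
    rw [uIcc_of_le hx.1.le] at hR
    rw [uIoo_of_le hx.1.le] at hξ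
    have hTay : taylorWithinEval f N (Icc 0 x) 0 x =
        ∑ l ∈ Finset.range (N + 1),
          (iteratedDerivWithin l f (Ico 0 ε) 0 / l !) * x ^ l := by
      rw [taylor_within_apply]
      refine Finset.sum_congr rfl fun l _ => ?_
      rw [iDW_congr_set (sets_eq_zero hx.1 hε) l]
      simp [smul_eq_mul]
      ring
    have hξ2 : iteratedDerivWithin (N+1) f (Icc 0 x) ξ =
        iteratedDerivWithin (N+1) f (Ico 0 ε) ξ :=
      iDW_congr_set (sets_eq_near hx.1 hxε hξ) (N+1)
    have hξmem : ξ ∈ Icc (0:ℝ) (ε/2) := ⟨le_of_lt hξ.1, le_of_lt (lt_trans hξ.2 hx.2)⟩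
    have hb := hM ξ hξmem
    have hxpos : (0:ℝ) < x ^ (N+1) := pow_pos hx.1 _
    have hfac : (0:ℝ) < (N+1)! := by positivity
    rw [← hTay, hR, hξ2, sub_zero, abs_div, abs_mul, abs_pow, abs_of_pos hx.1, Nat.abs_cast]
    rw [div_le_iff₀ hfac]
    have hb' : |iteratedDerivWithin (N+1) f (Ico 0 ε) ξ| ≤ M := by
      simpa [Real.norm_eq_abs] using hb
    calc |iteratedDerivWithin (N+1) f (Ico 0 ε) ξ| * x ^ (N+1)
        ≤ M * x ^ (N+1) := mul_le_mul_of_nonneg_right hb' (le_of_lt hxpos)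
      _ = M / (N+1)! * x ^ (N+1) * (N+1)! := by field_simp
  -- conclude littleO
  have hO : (fun t : ℝ => f t - ∑ l ∈ Finset.range (N + 1),
      (iteratedDerivWithin l f (Ico 0 ε) 0 / l !) * t ^ l)
      =O[nhdsWithin 0 (Ioi 0)] fun t : ℝ => t ^ (N + 1) := by
    rw [Asymptotics.isBigO_iff]
    refine ⟨M / (N+1)!, ?_⟩
    filter_upwards [Ioo_mem_nhdsGT (by linarith : (0:ℝ) < ε/2)] with x hx
    have := key x hx
    rw [Real.norm_eq_abs, Real.norm_eq_abs, abs_pow, abs_of_pos hx.1]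
    exact this
  refine hO.trans_isLittleO ?_
  have h1 : (fun t : ℝ => t) =o[nhdsWithin 0 (Ioi 0)] (fun _ : ℝ => (1:ℝ)) := by
    rw [Asymptotics.isLittleO_one_iff]
    exact tendsto_nhdsWithin_of_tendsto_nhds (by exact tendsto_id)
  have := h1.mul_isBigO (Asymptotics.isBigO_refl (fun t : ℝ => t ^ N) (nhdsWithin 0 (Ioi 0)))
  simpa [pow_succ, mul_comm] using this

/-- Solutions of `t v' - a v = t c(t) v` near `t = 0`, with `c` smooth on `[0,ε)`,
have a polyhomogeneous expansion `v ~ t^a Σ v_l t^l`: for each `N` there are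
coefficients `v₀, …, v_N` with `v - t^a Σ_{l≤N} v_l t^l = o(t^{a+N})` as `t → 0⁺`.
In particular `t^{-a} v` extends continuously to `t = 0`. -/
theorem stmt_5 (ε a : ℝ) (hε : 0 < ε) (c v : ℝ → ℝ)
    (hc : ContDiffOn ℝ (⊤ : ℕ∞) c (Set.Ico 0 ε))
    (hv : ∀ t ∈ Set.Ioo (0 : ℝ) ε, DifferentiableAt ℝ v t ∧
      t * deriv v t - a * v t = t * c t * v t) :
    ∃ coeff : ℕ → ℝ,
      (∀ N : ℕ,
        (fun t : ℝ => v t - t ^ a * ∑ l ∈ Finset.range (N + 1), coeff l * t ^ l)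
          =o[nhdsWithin 0 (Set.Ioi 0)] fun t : ℝ => t ^ (a + N)) ∧
      Tendsto (fun t : ℝ => t ^ (-a) * v t) (nhdsWithin 0 (Set.Ioi 0))
        (nhds (coeff 0)) := by
  have husd : UniqueDiffOn ℝ (Ico (0:ℝ) ε) := uniqueDiffOn_Ico 0 ε
  have hc' : ContDiffOn ℝ (⊤ : ℕ∞) c (Ico 0 ε) := hc.of_le (by simp)
  have hcc : ContinuousOn c (Ico 0 ε) := hc'.continuousOn
  set C : ℝ → ℝ := fun t => ∫ u in (0:ℝ)..t, c u with hCdef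
  -- interval integrability
  have hint : ∀ t ∈ Ico (0:ℝ) ε, IntervalIntegrable c MeasureTheory.volume 0 t := by
    intro t ht
    apply ContinuousOn.intervalIntegrable
    rw [Set.uIcc_of_le ht.1]
    exact hcc.mono (fun z hz => ⟨hz.1, lt_of_le_of_lt hz.2 ht.2⟩)
  -- derivative at interior points
  have hCdAt : ∀ t ∈ Ioo (0:ℝ) ε, HasDerivAt C (c t) t := by
    intro t ht
    have hmem : Ioo (0:ℝ) ε ∈ nhds t := isOpen_Ioo.mem_nhds ht
    have hconAt : ContinuousAt c t :=
      hcc.continuousAt (mem_of_superset hmem Ioo_subset_Ico_self)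
    have hmeas : StronglyMeasurableAtFilter c (nhds t) MeasureTheory.volume :=
      ⟨Ioo 0 ε, hmem, (hcc.mono Ioo_subset_Ico_self).aestronglyMeasurable measurableSet_Ioo⟩
    exact intervalIntegral.integral_hasDerivAt_right (hint t (Ioo_subset_Ico_self ht)) hmeas hconAt
  -- derivative within at 0
  have h0mem : (0:ℝ) ∈ Ico (0:ℝ) ε := ⟨le_refl _, hε⟩
  have hIcomem : Ico (0:ℝ) ε ∈ nhdsWithin 0 (Ici 0) := by
    rw [← Set.Ici_inter_Iio]
    exact inter_mem_nhdsWithin _ (Iio_mem_nhds hε)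
  have hCd0 : HasDerivWithinAt C (c 0) (Ico 0 ε) 0 := by
    have hIoimem : Ico (0:ℝ) ε ∈ nhdsWithin 0 (Ioi 0) :=
      mem_of_superset (Ioo_mem_nhdsGT hε) Ioo_subset_Ico_self
    have hmeas : StronglyMeasurableAtFilter c (nhdsWithin 0 (Ioi 0)) MeasureTheory.volume :=
      ⟨Ico 0 ε, hIoimem, hcc.aestronglyMeasurable measurableSet_Ico⟩
    have hctw : ContinuousWithinAt c (Ioi 0) 0 :=
      (hcc.continuousWithinAt h0mem).mono_of_mem_nhdsWithin hIoimem
    exact (intervalIntegral.integral_hasDerivWithinAt_right (hint 0 h0mem)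
      (s := Ici 0) (t := Ioi 0) hmeas hctw).mono (fun z hz => hz.1)
  have hCd : ∀ t ∈ Ico (0:ℝ) ε, HasDerivWithinAt C (c t) (Ico 0 ε) t := by
    intro t ht
    rcases eq_or_lt_of_le ht.1 with h0 | h0
    · rw [← h0]; exact hCd0
    · exact (hCdAt t ⟨h0, ht.2⟩).hasDerivWithinAt
  -- smoothness of C
  have hCsm : ContDiffOn ℝ (⊤:ℕ∞) C (Ico 0 ε) := by
    rw [contDiffOn_infty_iff_derivWithin husd]
    refine ⟨fun t ht => (hCd t ht).differentiableWithinAt, ?_⟩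
    exact hc'.congr (fun t ht => (hCd t ht).derivWithin (husd t ht))
  -- derivative of the reduced function g is zero
  have hgd : ∀ t ∈ Ioo (0:ℝ) ε,
      HasDerivAt (fun x => v x * (x ^ (-a) * Real.exp (-C x))) 0 t := by
    intro t ht
    have htpos := ht.1
    have hvd := (hv t ht).1
    have hode := (hv t ht).2
    have hC := hCdAt t ht
    have h1 : HasDerivAt (fun x : ℝ => x ^ (-a)) (-a * t ^ (-a - 1)) t :=
      Real.hasDerivAt_rpow_const (Or.inl (ne_of_gt htpos))
    have h2 : HasDerivAt (fun x => Real.exp (-C x)) (Real.exp (-C t) * -c t) t := hC.neg.exp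
    have h4 := hvd.hasDerivAt.mul (h1.mul h2)
    have hts : t ^ (-a) = t ^ (-a - 1) * t := by
      rw [← Real.rpow_add_one (ne_of_gt htpos) (-a - 1)]
      congr 1; ring
    have h5 : t * deriv v t - a * v t - t * c t * v t = 0 := by rw [hode]; ring
    convert h4 using 1 <;> try rfl
    simp only [Pi.mul_apply]
    rw [hts]
    linear_combination (-(Real.exp (-C t)) * t ^ (-a - 1)) * h5
  -- g is constant
  have hconst : ∀ x ∈ Ioo (0:ℝ) ε, ∀ y ∈ Ioo (0:ℝ) ε, x ≤ y →
      v y * (y ^ (-a) * Real.exp (-C y)) = v x * (x ^ (-a) * Real.exp (-C x)) := by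
    intro x hx y hy hxy
    have hsub : Icc x y ⊆ Ioo 0 ε := fun z hz =>
      ⟨lt_of_lt_of_le hx.1 hz.1, lt_of_le_of_lt hz.2 hy.2⟩
    have hcont : ContinuousOn (fun x => v x * (x ^ (-a) * Real.exp (-C x))) (Icc x y) :=
      fun z hz => ((hgd z (hsub hz)).differentiableAt.continuousAt).continuousWithinAt
    have := constant_of_has_deriv_right_zero hcont
      (fun z hz => ((hgd z (hsub (Ico_subset_Icc_self hz))).hasDerivWithinAt))
    exact this y (right_mem_Icc.2 hxy)
  have hhalf : (ε/2 : ℝ) ∈ Ioo (0:ℝ) ε := ⟨by linarith, by linarith⟩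
  set K : ℝ := v (ε/2) * ((ε/2) ^ (-a) * Real.exp (-C (ε/2))) with hKdef
  set f : ℝ → ℝ := fun t => K * Real.exp (C t) with hfdef
  have hvf : ∀ t ∈ Ioo (0:ℝ) ε, v t = t ^ a * f t := by
    intro t ht
    have htpos := ht.1
    have hKg : v t * (t ^ (-a) * Real.exp (-C t)) = K := by
      rcases le_total t (ε/2) with h | h
      · exact (hconst t ht (ε/2) hhalf h).symm
      · exact hconst (ε/2) hhalf t ht h
    have h1 : t ^ (-a) * t ^ a = 1 := by
      rw [← Real.rpow_add htpos]; simp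
    have h2 : Real.exp (-C t) * Real.exp (C t) = 1 := by
      rw [← Real.exp_add]; simp
    calc v t = v t * ((t ^ (-a) * t ^ a) * (Real.exp (-C t) * Real.exp (C t))) := by
          rw [h1, h2]; ring
      _ = (v t * (t ^ (-a) * Real.exp (-C t))) * (t ^ a * Real.exp (C t)) := by ring
      _ = K * (t ^ a * Real.exp (C t)) := by rw [hKg]
      _ = t ^ a * f t := by rw [hfdef]; ring
  have hfsm : ContDiffOn ℝ (⊤:ℕ∞) f (Ico 0 ε) :=
    contDiffOn_const.mul ((Real.contDiff_exp.of_le le_top).comp_contDiffOn hCsm)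
  refine ⟨fun l => iteratedDerivWithin l f (Ico 0 ε) 0 / l !, ?_, ?_⟩
  · intro N
    have hT := taylor_littleO hε hfsm N
    have hbig := (Asymptotics.isBigO_refl (fun t : ℝ => t ^ a)
      (nhdsWithin 0 (Ioi 0))).mul_isLittleO hT
    have hg : (fun t : ℝ => t ^ a * t ^ N) =ᶠ[nhdsWithin 0 (Ioi 0)]
        fun t : ℝ => t ^ (a + (N:ℝ)) := by
      filter_upwards [self_mem_nhdsWithin] with t ht
      rw [Real.rpow_add ht, Real.rpow_natCast]
    have heq : (fun t : ℝ => v t - t ^ a * ∑ l ∈ Finset.range (N + 1),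
        (iteratedDerivWithin l f (Ico 0 ε) 0 / l !) * t ^ l)
        =ᶠ[nhdsWithin 0 (Ioi 0)] fun t : ℝ => t ^ a * (f t - ∑ l ∈ Finset.range (N + 1),
        (iteratedDerivWithin l f (Ico 0 ε) 0 / l !) * t ^ l) := by
      filter_upwards [Ioo_mem_nhdsGT hε] with t ht
      rw [hvf t ht]; ring
    exact heq.trans_isLittleO (hbig.congr' Filter.EventuallyEq.rfl hg)
  · have hf0 : Tendsto f (nhdsWithin 0 (Ico 0 ε)) (nhds (f 0)) :=
      hfsm.continuousOn 0 h0mem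
    have hle : nhdsWithin (0:ℝ) (Ioi 0) ≤ nhdsWithin 0 (Ico 0 ε) :=
      nhdsWithin_le_of_mem (mem_of_superset (Ioo_mem_nhdsGT hε) Ioo_subset_Ico_self)
    have h1 : Tendsto f (nhdsWithin 0 (Ioi 0)) (nhds (f 0)) := hf0.mono_left hle
    have heq2 : (fun t : ℝ => t ^ (-a) * v t) =ᶠ[nhdsWithin 0 (Ioi 0)] f := by
      filter_upwards [Ioo_mem_nhdsGT hε] with t ht
      have hmm : t ^ (-a) * t ^ a = 1 := by rw [← Real.rpow_add ht.1]; simp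
      rw [hvf t ht, ← mul_assoc, hmm, one_mul]
    have := h1.congr' heq2.symm
    simpa [iteratedDerivWithin_zero] using this
end

section
/- Let v₁, v₂ be a basis of solutions of a second-order linear ODE Q v = 0 on [0,δ) with Wronskian W(v₁,v₂)(w) ≠ 0 for w > 0, and suppose |v_i(w)| ≤ C w^{-N} for some N. If r : [0,δ) → ℝ is continuous, supported in {w ≥ 0}, and vanishes to all orders at w = 0 (r(w) = O(w^M) for every M), then u(w) = -v₁(w)∫₀^w v₂ r / W(v₁,v₂) + v₂(w)∫₀^w v₁ r / W(v₁,v₂) also vanishes to all orders at w = 0, and satisfies Q u = r wherever Q is defined. -/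
/-!
The integrands `vᵢ r / W` are products of a function vanishing to all orders with two factors
of growth `w^{-N}`, and such growth is absorbed by flatness: for `0 < w ≤ δ`,
`w^{M + ⌈N⌉} · w^{-N} ≤ δ^{⌈N⌉ - N} w^M`. Hence `∫₀^w vᵢ r / W` vanishes to all orders,
and so does `u` after one more multiplication by `vᵢ`. That `u` solves the equation is the
usual computation: `v₂ (v₁ r / W) - v₁ (v₂ r / W)` cancels in `u'`, and
`v₂' (v₁ r / W) - v₁' (v₂ r / W) = r` is what is left over in `u''`.
-/

open Set MeasureTheory intervalIntegral

def FlatAtZeroOn (f : ℝ → ℝ) (s : Set ℝ) : Prop :=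
  ∀ M : ℕ, ∃ C : ℝ, ∀ w ∈ s, |f w| ≤ C * w ^ M

lemma rpow_neg_mul_pow_le {w δ N : ℝ} {n : ℕ} (hw : 0 < w) (hwδ : w ≤ δ) (hn : N ≤ n) :
    w ^ (-N) * w ^ n ≤ δ ^ ((n : ℝ) - N) := by
  rw [← Real.rpow_natCast w n, ← Real.rpow_add hw, neg_add_eq_sub]
  exact Real.rpow_le_rpow hw.le hwδ (sub_nonneg.mpr hn)

namespace FlatAtZeroOn

variable {f g : ℝ → ℝ} {s t : Set ℝ} {δ : ℝ}

lemma mono (hf : FlatAtZeroOn f s) (hts : t ⊆ s) : FlatAtZeroOn f t := fun M => by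
  obtain ⟨C, hC⟩ := hf M
  exact ⟨C, fun w hw => hC w (hts hw)⟩

lemma congr (hf : FlatAtZeroOn f s) (hfg : EqOn f g s) : FlatAtZeroOn g s := fun M => by
  obtain ⟨C, hC⟩ := hf M
  exact ⟨C, fun w hw => hfg hw ▸ hC w hw⟩

lemma add (hf : FlatAtZeroOn f s) (hg : FlatAtZeroOn g s) :
    FlatAtZeroOn (fun w => f w + g w) s := fun M => by
  obtain ⟨C, hC⟩ := hf M
  obtain ⟨D, hD⟩ := hg M
  refine ⟨C + D, fun w hw => ?_⟩
  calc |f w + g w| ≤ |f w| + |g w| := abs_add_le _ _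
    _ ≤ C * w ^ M + D * w ^ M := add_le_add (hC w hw) (hD w hw)
    _ = (C + D) * w ^ M := by ring

lemma exists_bound (hf : FlatAtZeroOn f s) : ∃ B, ∀ w ∈ s, |f w| ≤ B := by
  obtain ⟨B, hB⟩ := hf 0
  exact ⟨B, fun w hw => by simpa using hB w hw⟩

lemma mul_left_of_abs_le_rpow (hf : FlatAtZeroOn f (Ioo 0 δ)) {C N : ℝ}
    (hg : ∀ w ∈ Ioo 0 δ, |g w| ≤ C * w ^ (-N)) :
    FlatAtZeroOn (fun w => g w * f w) (Ioo 0 δ) := fun M => by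
  obtain ⟨D, hD⟩ := hf (M + ⌈N⌉₊)
  refine ⟨C * D * δ ^ ((⌈N⌉₊ : ℝ) - N), fun w hw => ?_⟩
  have hfw := hD w hw
  have hgw := hg w hw
  have hpow : 0 < w ^ (M + ⌈N⌉₊) := pow_pos hw.1 _
  have hD₀ : 0 ≤ D := nonneg_of_mul_nonneg_left ((abs_nonneg _).trans hfw) hpow
  have hC₀ : 0 ≤ C :=
    nonneg_of_mul_nonneg_left ((abs_nonneg _).trans hgw) (Real.rpow_pos_of_pos hw.1 _)
  calc |g w * f w| = |g w| * |f w| := abs_mul _ _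
    _ ≤ C * w ^ (-N) * (D * w ^ (M + ⌈N⌉₊)) :=
        mul_le_mul hgw hfw (abs_nonneg _) ((abs_nonneg _).trans hgw)
    _ = C * D * w ^ M * (w ^ (-N) * w ^ ⌈N⌉₊) := by ring
    _ ≤ C * D * w ^ M * δ ^ ((⌈N⌉₊ : ℝ) - N) :=
        mul_le_mul_of_nonneg_left (rpow_neg_mul_pow_le hw.1 hw.2.le (Nat.le_ceil N))
          (mul_nonneg (mul_nonneg hC₀ hD₀) (pow_nonneg hw.1.le M))
    _ = C * D * δ ^ ((⌈N⌉₊ : ℝ) - N) * w ^ M := by ring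

lemma integral (hf : FlatAtZeroOn f (Ioo 0 δ)) :
    FlatAtZeroOn (fun w => ∫ t in (0 : ℝ)..w, f t) (Ioo 0 δ) := fun M => by
  obtain ⟨C, hC⟩ := hf M
  refine ⟨C * δ, fun w hw => ?_⟩
  have hC₀ : 0 ≤ C :=
    nonneg_of_mul_nonneg_left ((abs_nonneg _).trans (hC w hw)) (pow_pos hw.1 M)
  have hbound : ∀ t ∈ uIoc 0 w, ‖f t‖ ≤ C * w ^ M := by
    intro t ht
    rw [uIoc_of_le hw.1.le] at ht
    calc ‖f t‖ ≤ C * t ^ M := hC t ⟨ht.1, ht.2.trans_lt hw.2⟩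
      _ ≤ C * w ^ M := mul_le_mul_of_nonneg_left (pow_le_pow_left₀ ht.1.le ht.2 M) hC₀
  calc |∫ t in (0 : ℝ)..w, f t| ≤ C * w ^ M * |w - 0| :=
        norm_integral_le_of_norm_le_const hbound
    _ = C * w ^ M * w := by rw [sub_zero, abs_of_pos hw.1]
    _ ≤ C * w ^ M * δ :=
        mul_le_mul_of_nonneg_left hw.2.le (mul_nonneg hC₀ (pow_nonneg hw.1.le M))
    _ = C * δ * w ^ M := by ring

end FlatAtZeroOn

lemma hasDerivAt_integral_of_continuousOn_Ioo {f : ℝ → ℝ} {δ B w : ℝ}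
    (hf : ContinuousOn f (Ioo 0 δ)) (hB : ∀ t ∈ Ioo 0 δ, |f t| ≤ B) (hw : w ∈ Ioo 0 δ) :
    HasDerivAt (fun x => ∫ t in (0 : ℝ)..x, f t) (f w) w := by
  have hsub : Ioc 0 w ⊆ Ioo 0 δ := fun t ht => ⟨ht.1, ht.2.trans_lt hw.2⟩
  have hint : IntervalIntegrable f volume 0 w := by
    rw [intervalIntegrable_iff_integrableOn_Ioc_of_le hw.1.le]
    exact IntegrableOn.of_bound measure_Ioc_lt_top
      ((hf.mono hsub).aestronglyMeasurable measurableSet_Ioc) B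
      ((ae_restrict_iff' measurableSet_Ioc).2 (ae_of_all _ fun t ht => hB t (hsub ht)))
  exact integral_hasDerivAt_right hint (hf.stronglyMeasurableAtFilter isOpen_Ioo w hw)
    (hf.continuousAt (isOpen_Ioo.mem_nhds hw))

lemma variationOfParameters_ode {U : Set ℝ} (hU : IsOpen U)
    {p q r v₁ v₂ I₁ I₂ g₁ g₂ u : ℝ → ℝ}
    (hd₁ : ∀ w ∈ U, DifferentiableAt ℝ v₁ w ∧ DifferentiableAt ℝ (deriv v₁) w)
    (hd₂ : ∀ w ∈ U, DifferentiableAt ℝ v₂ w ∧ DifferentiableAt ℝ (deriv v₂) w)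
    (hode₁ : ∀ w ∈ U, deriv (deriv v₁) w + p w * deriv v₁ w + q w * v₁ w = 0)
    (hode₂ : ∀ w ∈ U, deriv (deriv v₂) w + p w * deriv v₂ w + q w * v₂ w = 0)
    (hI₁ : ∀ w ∈ U, HasDerivAt I₁ (g₁ w) w)
    (hI₂ : ∀ w ∈ U, HasDerivAt I₂ (g₂ w) w)
    (hcancel : ∀ w ∈ U, v₂ w * g₁ w - v₁ w * g₂ w = 0)
    (hjump : ∀ w ∈ U, deriv v₂ w * g₁ w - deriv v₁ w * g₂ w = r w)
    (hu : ∀ w ∈ U, u w = -v₁ w * I₂ w + v₂ w * I₁ w) (w : ℝ) (hw : w ∈ U) :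
    deriv (deriv u) w + p w * deriv u w + q w * u w = r w := by
  have hderiv : ∀ x ∈ U, deriv u x = -deriv v₁ x * I₂ x + deriv v₂ x * I₁ x := by
    intro x hx
    have h : HasDerivAt (fun x => -v₁ x * I₂ x + v₂ x * I₁ x)
        (-deriv v₁ x * I₂ x + -v₁ x * g₂ x + (deriv v₂ x * I₁ x + v₂ x * g₁ x)) x :=
      ((hd₁ x hx).1.hasDerivAt.neg.mul (hI₂ x hx)).add
        ((hd₂ x hx).1.hasDerivAt.mul (hI₁ x hx))
    rw [(Filter.eventuallyEq_of_mem (hU.mem_nhds hx) hu).deriv_eq, h.deriv]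
    linear_combination hcancel x hx
  have hderiv2 : deriv (deriv u) w = -deriv (deriv v₁) w * I₂ w - deriv v₁ w * g₂ w
      + deriv (deriv v₂) w * I₁ w + deriv v₂ w * g₁ w := by
    have h : HasDerivAt (fun x => -deriv v₁ x * I₂ x + deriv v₂ x * I₁ x)
        (-deriv (deriv v₁) w * I₂ w + -deriv v₁ w * g₂ w
          + (deriv (deriv v₂) w * I₁ w + deriv v₂ w * g₁ w)) w :=
      ((hd₁ w hw).2.hasDerivAt.neg.mul (hI₂ w hw)).add
        ((hd₂ w hw).2.hasDerivAt.mul (hI₁ w hw))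
    rw [(Filter.eventuallyEq_of_mem (hU.mem_nhds hw) hderiv).deriv_eq, h.deriv]
    ring
  rw [hderiv2, hderiv w hw, hu w hw]
  linear_combination -I₂ w * hode₁ w hw + I₁ w * hode₂ w hw + hjump w hw

theorem stmt_18_general (δ : ℝ) (p q r v₁ v₂ : ℝ → ℝ) (C N : ℝ)
    (hd₁ : ∀ w ∈ Set.Ioo (0 : ℝ) δ,
      DifferentiableAt ℝ v₁ w ∧ DifferentiableAt ℝ (deriv v₁) w)
    (hd₂ : ∀ w ∈ Set.Ioo (0 : ℝ) δ,
      DifferentiableAt ℝ v₂ w ∧ DifferentiableAt ℝ (deriv v₂) w)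
    (hode₁ : ∀ w ∈ Set.Ioo (0 : ℝ) δ,
      deriv (deriv v₁) w + p w * deriv v₁ w + q w * v₁ w = 0)
    (hode₂ : ∀ w ∈ Set.Ioo (0 : ℝ) δ,
      deriv (deriv v₂) w + p w * deriv v₂ w + q w * v₂ w = 0)
    (hW : ∀ w ∈ Set.Ioo (0 : ℝ) δ,
      v₁ w * deriv v₂ w - v₂ w * deriv v₁ w ≠ 0)
    (hbound : ∀ w ∈ Set.Ioo (0 : ℝ) δ,
      |v₁ w| ≤ C * w ^ (-N) ∧ |v₂ w| ≤ C * w ^ (-N) ∧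
      |1 / (v₁ w * deriv v₂ w - v₂ w * deriv v₁ w)| ≤ C * w ^ (-N))
    (hr : ContinuousOn r (Set.Ico 0 δ))
    (hrflat : ∀ M : ℕ, ∃ CM : ℝ, ∀ w ∈ Set.Ico (0 : ℝ) δ, |r w| ≤ CM * w ^ M)
    (u : ℝ → ℝ)
    (hu : ∀ w ∈ Set.Ioo (0 : ℝ) δ,
      u w = -v₁ w * (∫ t in (0 : ℝ)..w,
              v₂ t * r t / (v₁ t * deriv v₂ t - v₂ t * deriv v₁ t)) +
            v₂ w * ∫ t in (0 : ℝ)..w,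
              v₁ t * r t / (v₁ t * deriv v₂ t - v₂ t * deriv v₁ t)) :
    (∀ M : ℕ, ∃ CM : ℝ, ∀ w ∈ Set.Ioo (0 : ℝ) δ, |u w| ≤ CM * w ^ M) ∧
    (∀ w ∈ Set.Ioo (0 : ℝ) δ,
      deriv (deriv u) w + p w * deriv u w + q w * u w = r w) := by
  set W : ℝ → ℝ := fun t => v₁ t * deriv v₂ t - v₂ t * deriv v₁ t
  have hW₀ : ∀ w ∈ Ioo 0 δ, W w ≠ 0 := hW
  have hv₁ : ∀ w ∈ Ioo 0 δ, |v₁ w| ≤ C * w ^ (-N) := fun w hw => (hbound w hw).1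
  have hv₂ : ∀ w ∈ Ioo 0 δ, |v₂ w| ≤ C * w ^ (-N) := fun w hw => (hbound w hw).2.1
  have hWinv : ∀ w ∈ Ioo 0 δ, |1 / W w| ≤ C * w ^ (-N) := fun w hw => (hbound w hw).2.2
  have hcont : ∀ f : ℝ → ℝ, (∀ w ∈ Ioo 0 δ, DifferentiableAt ℝ f w) →
      ContinuousOn f (Ioo 0 δ) :=
    fun f hf w hw => (hf w hw).continuousAt.continuousWithinAt
  have hcW : ContinuousOn W (Ioo 0 δ) :=
    ((hcont _ fun w hw => (hd₁ w hw).1).mul (hcont _ fun w hw => (hd₂ w hw).2)).sub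
      ((hcont _ fun w hw => (hd₂ w hw).1).mul (hcont _ fun w hw => (hd₁ w hw).2))
  have hr₀ : FlatAtZeroOn r (Ioo 0 δ) := FlatAtZeroOn.mono hrflat Ioo_subset_Ico_self
  have hflat : ∀ v : ℝ → ℝ, (∀ w ∈ Ioo 0 δ, |v w| ≤ C * w ^ (-N)) →
      FlatAtZeroOn (fun t => v t * r t / W t) (Ioo 0 δ) := fun v hv =>
    ((hr₀.mul_left_of_abs_le_rpow hv).mul_left_of_abs_le_rpow hWinv).congr fun t _ => by ring
  have hI : ∀ v : ℝ → ℝ, (∀ w ∈ Ioo 0 δ, |v w| ≤ C * w ^ (-N)) →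
      (∀ w ∈ Ioo 0 δ, DifferentiableAt ℝ v w) → ∀ w ∈ Ioo 0 δ,
      HasDerivAt (fun x => ∫ t in (0 : ℝ)..x, v t * r t / W t) (v w * r w / W w) w := by
    intro v hvb hvd w hw
    obtain ⟨B, hB⟩ := (hflat v hvb).exists_bound
    exact hasDerivAt_integral_of_continuousOn_Ioo
      (((hcont v hvd).mul (hr.mono Ioo_subset_Ico_self)).div hcW hW₀) hB hw
  constructor
  · exact (((hflat v₂ hv₂).integral.mul_left_of_abs_le_rpow (g := fun w => -v₁ w)
      fun w hw => (abs_neg (v₁ w)).trans_le (hv₁ w hw)).add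
      ((hflat v₁ hv₁).integral.mul_left_of_abs_le_rpow hv₂)).congr fun w hw => (hu w hw).symm
  · exact variationOfParameters_ode isOpen_Ioo hd₁ hd₂ hode₁ hode₂
      (hI v₁ hv₁ fun w hw => (hd₁ w hw).1) (hI v₂ hv₂ fun w hw => (hd₂ w hw).1)
      (fun w _ => by ring) (fun w hw => by field_simp [hW₀ w hw]; ring) hu

/-- Variation of parameters preserving infinite-order vanishing: if `v₁, v₂`
solve `v'' + p v' + q v = 0` on `(0,δ)`, have nonvanishing Wronskian, `v₁, v₂`
and `1/W(v₁,v₂)` are bounded by `C w^{-N}`, and `r` is continuous and vanishes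
to all orders at `w = 0`, then
`u = -v₁ ∫₀^w v₂ r / W + v₂ ∫₀^w v₁ r / W` vanishes to all orders at `w = 0`
and solves `u'' + p u' + q u = r` on `(0,δ)`. -/
theorem stmt_18 (δ : ℝ) (hδ : 0 < δ) (p q r v₁ v₂ : ℝ → ℝ) (C N : ℝ)
    (hpq : ContinuousOn p (Set.Ioo 0 δ) ∧ ContinuousOn q (Set.Ioo 0 δ))
    (hd₁ : ∀ w ∈ Set.Ioo (0 : ℝ) δ,
      DifferentiableAt ℝ v₁ w ∧ DifferentiableAt ℝ (deriv v₁) w)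
    (hd₂ : ∀ w ∈ Set.Ioo (0 : ℝ) δ,
      DifferentiableAt ℝ v₂ w ∧ DifferentiableAt ℝ (deriv v₂) w)
    (hode₁ : ∀ w ∈ Set.Ioo (0 : ℝ) δ,
      deriv (deriv v₁) w + p w * deriv v₁ w + q w * v₁ w = 0)
    (hode₂ : ∀ w ∈ Set.Ioo (0 : ℝ) δ,
      deriv (deriv v₂) w + p w * deriv v₂ w + q w * v₂ w = 0)
    (hW : ∀ w ∈ Set.Ioo (0 : ℝ) δ,
      v₁ w * deriv v₂ w - v₂ w * deriv v₁ w ≠ 0)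
    (hbound : ∀ w ∈ Set.Ioo (0 : ℝ) δ,
      |v₁ w| ≤ C * w ^ (-N) ∧ |v₂ w| ≤ C * w ^ (-N) ∧
      |1 / (v₁ w * deriv v₂ w - v₂ w * deriv v₁ w)| ≤ C * w ^ (-N))
    (hr : ContinuousOn r (Set.Ico 0 δ))
    (hrflat : ∀ M : ℕ, ∃ CM : ℝ, ∀ w ∈ Set.Ico (0 : ℝ) δ, |r w| ≤ CM * w ^ M)
    (u : ℝ → ℝ)
    (hu : ∀ w ∈ Set.Ioo (0 : ℝ) δ,
      u w = -v₁ w * (∫ t in (0 : ℝ)..w,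
              v₂ t * r t / (v₁ t * deriv v₂ t - v₂ t * deriv v₁ t)) +
            v₂ w * ∫ t in (0 : ℝ)..w,
              v₁ t * r t / (v₁ t * deriv v₂ t - v₂ t * deriv v₁ t)) :
    (∀ M : ℕ, ∃ CM : ℝ, ∀ w ∈ Set.Ioo (0 : ℝ) δ, |u w| ≤ CM * w ^ M) ∧
    (∀ w ∈ Set.Ioo (0 : ℝ) δ,
      deriv (deriv u) w + p w * deriv u w + q w * u w = r w) :=
  stmt_18_general δ p q r v₁ v₂ C N hd₁ hd₂ hode₁ hode₂ hW hbound hr hrflat u hu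
end
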